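/- arXiv:1910.14381 — 2 statements merged into one kernel-verified Lean document; each statement's English description precedes it below -/
import Mathlib

section
/- Completeness of commutative Kleene algebra: for all commutative regular expressions e and f over a finite alphabet Σ, e ≡ f if and only if ⟦e⟧ = ⟦f⟧. -/
namespace CKAnote

/-- Commutative regular expressions over an alphabet `α`. -/
inductive CRE (α : Type) where
  | zero : CRE α
  | one : CRE α
  | letter : α → CRE α
  | mul : CRE α → CRE α → CRE α
  | union : CRE α → CRE α → CRE α
  | star : CRE α → CRE α

variable {α : Type} [Fintype α] [DecidableEq α]

/-- Semantics of a commutative regular expression as a set of Parikh vectors. -/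
def sem : CRE α → Set (α → ℕ)
  | .zero => ∅
  | .one => {0}
  | .letter a => {Pi.single a 1}
  | .mul e f => {w | ∃ u ∈ sem e, ∃ v ∈ sem f, w = u + v}
  | .union e f => sem e ∪ sem f
  | .star e => ↑(AddSubmonoid.closure (sem e))

/-- Provable equality: the smallest congruence containing the axioms of
commutative Kleene algebra (where `e ≤ f` abbreviates `e ∪ f ≡ f`). -/
inductive CKA : CRE α → CRE α → Prop
  | refl (e : CRE α) : CKA e e
  | symm {e f : CRE α} : CKA e f → CKA f e
  | trans {e f g : CRE α} : CKA e f → CKA f g → CKA e g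
  | mul_congr {e e' f f' : CRE α} : CKA e e' → CKA f f' → CKA (e.mul f) (e'.mul f')
  | union_congr {e e' f f' : CRE α} : CKA e e' → CKA f f' → CKA (e.union f) (e'.union f')
  | star_congr {e e' : CRE α} : CKA e e' → CKA e.star e'.star
  | mul_assoc (e f g : CRE α) : CKA (e.mul (f.mul g)) ((e.mul f).mul g)
  | mul_comm (e f : CRE α) : CKA (e.mul f) (f.mul e)
  | one_mul (e : CRE α) : CKA (CRE.one.mul e) e
  | union_assoc (e f g : CRE α) : CKA (e.union (f.union g)) ((e.union f).union g)
  | union_comm (e f : CRE α) : CKA (e.union f) (f.union e)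
  | union_idem (e : CRE α) : CKA (e.union e) e
  | zero_union (e : CRE α) : CKA (CRE.zero.union e) e
  | zero_mul (e : CRE α) : CKA (CRE.zero.mul e) CRE.zero
  | left_distrib (e f g : CRE α) : CKA (e.mul (f.union g)) ((e.mul f).union (e.mul g))
  | star_unfold (e : CRE α) : CKA ((CRE.one.union (e.mul e.star)).union e.star) e.star
  | star_lfp {e f : CRE α} : CKA ((e.mul f).union f) f → CKA ((e.star.mul f).union f) f

/-- `e ≤ f`, i.e. `e ∪ f ≡ f`. -/
def leq (e f : CRE α) : Prop := CKA (e.union f) f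

/-- `e^n`, the `n`-fold product of `e` with itself. -/
def pow (e : CRE α) : ℕ → CRE α
  | 0 => CRE.one
  | n + 1 => e.mul (pow e n)

/-- `e^{<n}`, i.e. `(e ∪ 1)^(n-1)` for `n > 0` and `0` for `n = 0`. -/
def ltPow (e : CRE α) : ℕ → CRE α
  | 0 => CRE.zero
  | n + 1 => pow (e.union CRE.one) n

/-- Finite union of a list of expressions. -/
def unionList : List (CRE α) → CRE α
  | [] => CRE.zero
  | e :: l => e.union (unionList l)

/-- Finite product of a list of expressions. -/
def prodList : List (CRE α) → CRE α
  | [] => CRE.one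
  | e :: l => e.mul (prodList l)

/-- `expr(u)`: the product over `a ∈ α` of `u a` copies of the letter `a`. -/
noncomputable def exprVec (u : α → ℕ) : CRE α :=
  prodList ((Finset.univ : Finset α).toList.map (fun a => pow (CRE.letter a) (u a)))

/-- The union `⋃_{b ∈ B} expr(b)` for a finite set of Parikh vectors `B`. -/
noncomputable def unionVecs (B : Finset (α → ℕ)) : CRE α :=
  unionList (B.toList.map exprVec)

/-- The linear expression `expr(u) · (⋃_{b ∈ B} expr(b))*`. -/
noncomputable def linExpr (u : α → ℕ) (B : Finset (α → ℕ)) : CRE α :=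
  (exprVec u).mul (unionVecs B).star

/-- A finite set of Parikh vectors is independent when every Parikh vector
admits at most one representation as an `ℕ`-linear combination of its elements. -/
def Independent (B : Finset (α → ℕ)) : Prop :=
  ∀ c d : (α → ℕ) → ℕ, (∑ b ∈ B, c b • b) = (∑ b ∈ B, d b • b) → ∀ b ∈ B, c b = d b

/-- The semilinear expression associated to a list of linear data:
the finite union of the corresponding linear expressions. -/
noncomputable def semiLin (L : List ((α → ℕ) × Finset (α → ℕ))) : CRE α :=
  unionList (L.map (fun p => linExpr p.1 p.2))

/-- The dimension of a semilinear expression: the maximum of the dimensions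
of its linear components. -/
def dimSL (L : List ((α → ℕ) × Finset (α → ℕ))) : ℕ :=
  (L.map (fun p => p.2.card)).foldr max 0

/-- Finitary (star-free) expressions. -/
def NoStar : CRE α → Prop
  | .zero => True
  | .one => True
  | .letter _ => True
  | .mul e f => NoStar e ∧ NoStar f
  | .union e f => NoStar e ∧ NoStar f
  | .star _ => False

/-- Coordinatewise embedding of `ℕ^α` into `ℚ^α`. -/
def toQ (v : α → ℕ) : α → ℚ := fun a => (v a : ℚ)

end CKAnote

/-!
Soundness is an induction on derivations. For completeness, pass to the quotient `FreeCKA α` of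
expressions by provable equality, a commutative Kleene algebra. Write `mon u` for the monomial
with Parikh vector `u` and `lin u B = mon u * (∑ b ∈ B, mon b)∗`, whose semantics is the linear
set `u + ⟪B⟫`. Commutativity gives `(a + b)∗ = a∗ * b∗` and `(lin u B)∗ = 1 + lin u (insert u B)`,
so every element of `FreeCKA α` is a finite sum of linear elements, and it suffices to show that
`u + ⟪B⟫ ⊆ ⋃ₚ (vₚ + ⟪Pₚ⟫)` implies `lin u B ≤ ∑ₚ lin vₚ Pₚ`.

By Dickson's lemma, `(x + ⟪B⟫) ∩ (vₚ + ⟪Pₚ⟫)` is a finite union of translates `b + (⟪B⟫ ⊓ ⟪Pₚ⟫)`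
and `⟪B⟫ ⊓ ⟪Pₚ⟫` is finitely generated; `pieces x B` sums the corresponding linear elements over
all components. Each piece lies below its component, and `mon x ≤ pieces x B`. By star induction it
remains to absorb a generator `g ∈ B` into a piece: the product is the linear element of
`(b + g) + (⟪B⟫ ⊓ ⟪Pₚ⟫)`, below a piece of the same component if `g ∈ ⟪Pₚ⟫`; otherwise fewer
components fail to contain `⟪B⟫ ⊓ ⟪Pₚ⟫` than `⟪B⟫`, so by induction it lies below its own pieces,
which refine `pieces x B`.
-/

namespace CKAnote

open Computability Pointwise

local notation "⟪" B "⟫" => AddSubmonoid.closure (SetLike.coe B)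

section IdemSemiring

variable {K ι : Type*} [IdemSemiring K]

theorem sum_eq_sup (s : Finset ι) (f : ι → K) : ∑ i ∈ s, f i = s.sup f := by
  classical
  induction s using Finset.induction_on with
  | empty => exact bot_eq_zero.symm
  | insert a s ha ih => rw [Finset.sum_insert ha, Finset.sup_insert, ih, add_eq_sup]

theorem sum_le_iff {s : Finset ι} {f : ι → K} {a : K} :
    ∑ i ∈ s, f i ≤ a ↔ ∀ i ∈ s, f i ≤ a := by
  rw [sum_eq_sup, Finset.sup_le_iff]

theorem le_sum_of_mem {s : Finset ι} (f : ι → K) {i : ι} (hi : i ∈ s) : f i ≤ ∑ j ∈ s, f j :=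
  sum_le_iff.1 le_rfl i hi

theorem sum_union_idem [DecidableEq ι] (s t : Finset ι) (f : ι → K) :
    ∑ i ∈ s ∪ t, f i = ∑ i ∈ s, f i + ∑ i ∈ t, f i := by
  simp only [sum_eq_sup, Finset.sup_union, add_eq_sup]

theorem sum_insert_idem [DecidableEq ι] (a : ι) (s : Finset ι) (f : ι → K) :
    ∑ i ∈ insert a s, f i = f a + ∑ i ∈ s, f i := by
  simp only [sum_eq_sup, Finset.sup_insert, add_eq_sup]

end IdemSemiring

class CommKleeneAlgebra (K : Type*) extends KleeneAlgebra K, CommSemiring K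

section CommKleeneAlgebra

variable {K : Type*} [CommKleeneAlgebra K]

theorem kstar_add (a b : K) : (a + b)∗ = a∗ * b∗ := by
  refine le_antisymm (kstar_le_of_mul_le_left ?_ ?_) ?_
  · simpa using mul_le_mul' (one_le_kstar (a := a)) (one_le_kstar (a := b))
  · calc a∗ * b∗ * (a + b) = a∗ * a * b∗ + a∗ * (b∗ * b) := by ring
      _ ≤ a∗ * b∗ + a∗ * b∗ := by gcongr <;> exact kstar_mul_le_kstar
      _ = a∗ * b∗ := add_idem _
  · calc a∗ * b∗ ≤ (a + b)∗ * (a + b)∗ :=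
          mul_le_mul' (kstar_mono le_self_add) (kstar_mono le_add_self)
      _ = (a + b)∗ := kstar_mul_kstar _

theorem kstar_mul_kstar_eq_one_add (a b : K) : (a * b∗)∗ = 1 + a * (a + b)∗ := by
  have ha : a ≤ (a + b)∗ := le_self_add.trans le_kstar
  have hb : b∗ ≤ (a + b)∗ := kstar_mono le_add_self
  apply le_antisymm
  · refine kstar_le_of_mul_le_left le_self_add ?_
    calc (1 + a * (a + b)∗) * (a * b∗) = a * b∗ + a * ((a + b)∗ * a * b∗) := by ring
      _ ≤ a * (a + b)∗ + a * ((a + b)∗ * (a + b)∗ * (a + b)∗) := by gcongr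
      _ = a * (a + b)∗ := by simp only [kstar_mul_kstar, add_idem]
      _ ≤ 1 + a * (a + b)∗ := le_add_self
  · set z := (a * b∗)∗
    have hz : a * z ≤ z :=
      calc a * z ≤ a * b∗ * z := mul_le_mul_left (le_mul_of_one_le_right' one_le_kstar) z
        _ ≤ z := mul_kstar_le_kstar
    have hstar : a∗ * (a * b∗ * z) ≤ a * b∗ * z := kstar_mul_le_self <|
      calc a * (a * b∗ * z) = a * b∗ * (a * z) := by ring
        _ ≤ a * b∗ * z := by gcongr
    refine add_le one_le_kstar ?_
    calc a * (a + b)∗ = a∗ * (a * b∗) := by rw [kstar_add]; ring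
      _ ≤ a∗ * (a * b∗ * z) := mul_le_mul_right (le_mul_of_one_le_right' one_le_kstar) _
      _ ≤ a * b∗ * z := hstar
      _ ≤ z * z := mul_le_mul_left le_kstar z
      _ = z := kstar_mul_kstar _

end CommKleeneAlgebra

open Classical in
theorem card_filter_not_le_lt {ι β : Type*} [Preorder β] {s : Finset ι} {Q : ι → β} {a b : β}
    (hba : b ≤ a) {i : ι} (hi : i ∈ s) (ha : ¬a ≤ Q i) (hb : b ≤ Q i) :
    (s.filter fun j => ¬b ≤ Q j).card < (s.filter fun j => ¬a ≤ Q j).card := by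
  refine Finset.card_lt_card ((Finset.ssubset_iff_of_subset ?_).2 ⟨i, ?_, ?_⟩)
  · intro j hj
    rw [Finset.mem_filter] at hj ⊢
    exact ⟨hj.1, fun h => hj.2 (hba.trans h)⟩
  · exact Finset.mem_filter.2 ⟨hi, ha⟩
  · exact fun h => (Finset.mem_filter.1 h).2 hb

section FinitelyGenerated

variable {M : Type*} [AddCommMonoid M]

theorem add_mem_vadd {P : AddSubmonoid M} {x z g : M} (hz : z ∈ x +ᵥ (P : Set M)) (hg : g ∈ P) :
    z + g ∈ x +ᵥ (P : Set M) := by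
  obtain ⟨m, hm, rfl⟩ := hz
  exact ⟨m + g, add_mem hm hg, (add_assoc x m g).symm⟩

theorem vadd_subset_vadd_of_mem {P Q : AddSubmonoid M} {x z : M} (hz : z ∈ x +ᵥ (P : Set M))
    (hQ : Q ≤ P) : z +ᵥ (Q : Set M) ⊆ x +ᵥ (P : Set M) := by
  rintro _ ⟨q, hq, rfl⟩
  exact add_mem_vadd hz (hQ hq)

def combination (B : Finset M) : (B → ℕ) →+ M :=
  (Fintype.linearCombination ℕ ((↑) : B → M)).toAddMonoidHom

theorem mrange_combination (B : Finset M) : AddMonoidHom.mrange (combination B) = ⟪B⟫ := by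
  ext x
  rw [← Subtype.range_coe (s := (B : Set M)), AddSubmonoid.mem_closure_range_iff_of_fintype]
  simp [combination, Fintype.linearCombination_apply, eq_comm]

theorem mrange_inf_mrange {A A' : Type*} [AddCommMonoid A] [AddCommMonoid A']
    (f : A →+ M) (g : A' →+ M) :
    AddMonoidHom.mrange f ⊓ AddMonoidHom.mrange g =
      ((f.comp (AddMonoidHom.fst A A')).eqLocusM (g.comp (AddMonoidHom.snd A A'))).map
        (f.comp (AddMonoidHom.fst A A')) := by
  ext x
  constructor
  · rintro ⟨⟨a, rfl⟩, ⟨a', ha'⟩⟩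
    exact ⟨(a, a'), ha'.symm, rfl⟩
  · rintro ⟨⟨a, a'⟩, h, rfl⟩
    exact ⟨⟨a, rfl⟩, ⟨a', h.symm⟩⟩

theorem exists_minimal_add_mem_eqLocusM {D N : Type*} [AddCommMonoid D] [PartialOrder D]
    [WellQuasiOrderedLE D] [CanonicallyOrderedAdd D] [AddCommMonoid N] [IsCancelAdd N]
    (f g : D →+ N) (x y : N) {d : D} (hd : x + f d = y + g d) :
    ∃ t, Minimal (fun t => x + f t = y + g t) t ∧ ∃ e ∈ f.eqLocusM g, d = t + e := by
  obtain ⟨t, htd, ht⟩ := exists_minimal_le_of_wellFoundedLT (fun t => x + f t = y + g t) d hd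
  obtain ⟨e, rfl⟩ := exists_add_of_le htd
  refine ⟨t, ht, e, ?_, rfl⟩
  rw [map_add, map_add, ← add_assoc, ← add_assoc, ht.1] at hd
  exact add_left_cancel hd

variable [IsCancelAdd M]

theorem fg_inf {P Q : AddSubmonoid M} (hP : P.FG) (hQ : Q.FG) : (P ⊓ Q).FG := by
  obtain ⟨B, rfl⟩ := hP
  obtain ⟨C, rfl⟩ := hQ
  rw [← mrange_combination B, ← mrange_combination C, mrange_inf_mrange]
  exact (AddSubmonoid.fg_eqLocusM _ _).map _

theorem exists_finset_vadd_inter_vadd {P Q : AddSubmonoid M} (hP : P.FG) (hQ : Q.FG) (x y : M) :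
    ∃ T : Finset M, (x +ᵥ (P : Set M)) ∩ (y +ᵥ (Q : Set M)) = ↑T + ↑(P ⊓ Q) := by
  classical
  obtain ⟨B, rfl⟩ := hP
  obtain ⟨C, rfl⟩ := hQ
  set f := (combination B).comp (AddMonoidHom.fst (B → ℕ) (C → ℕ))
  set g := (combination C).comp (AddMonoidHom.snd (B → ℕ) (C → ℕ))
  have hfin : {t | Minimal (fun t => x + f t = y + g t) t}.Finite :=
    WellQuasiOrderedLE.finite_of_isAntichain (setOfPred_minimal_antichain _)
  have hinf : ⟪B⟫ ⊓ ⟪C⟫ = (f.eqLocusM g).map f := by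
    rw [← mrange_combination B, ← mrange_combination C, mrange_inf_mrange]
  refine ⟨(hfin.image fun t => x + f t).toFinset, ?_⟩
  rw [Set.Finite.coe_toFinset]
  ext z
  constructor
  · rintro ⟨⟨p, hp, rfl⟩, ⟨q, hq, hz⟩⟩
    rw [← mrange_combination] at hp hq
    obtain ⟨a, rfl⟩ := hp
    obtain ⟨a', rfl⟩ := hq
    obtain ⟨t, ht, e, he, hd⟩ := exists_minimal_add_mem_eqLocusM f g x y (d := (a, a')) hz.symm
    refine ⟨x + f t, ⟨t, ht, rfl⟩, f e, hinf ▸ ⟨e, he, rfl⟩, ?_⟩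
    show x + f t + f e = x + combination B a
    rw [add_assoc, ← map_add, ← hd]
    rfl
  · rintro ⟨_, ⟨t, ht, rfl⟩, m, ⟨hmB, hmC⟩, rfl⟩
    refine ⟨⟨f t + m, ?_, (add_assoc _ _ _).symm⟩, ⟨g t + m, ?_, ?_⟩⟩
    · exact add_mem (mrange_combination B ▸ ⟨t.1, rfl⟩) hmB
    · exact add_mem (mrange_combination C ▸ ⟨t.2, rfl⟩) hmC
    · show y + (g t + m) = x + f t + m
      rw [← add_assoc, ← ht.1]

noncomputable def interGens (B C : Finset M) : Finset M :=
  (fg_inf ⟨B, rfl⟩ ⟨C, rfl⟩).choose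

theorem closure_interGens (B C : Finset M) : ⟪interGens B C⟫ = ⟪B⟫ ⊓ ⟪C⟫ :=
  (fg_inf ⟨B, rfl⟩ ⟨C, rfl⟩).choose_spec

noncomputable def interBases (x : M) (B : Finset M) (y : M) (C : Finset M) : Finset M :=
  (exists_finset_vadd_inter_vadd ⟨B, rfl⟩ ⟨C, rfl⟩ x y).choose

theorem vadd_inter_vadd_eq (x : M) (B : Finset M) (y : M) (C : Finset M) :
    (x +ᵥ (⟪B⟫ : Set M)) ∩ (y +ᵥ (⟪C⟫ : Set M)) = ↑(interBases x B y C) + ↑(⟪B⟫ ⊓ ⟪C⟫) :=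
  (exists_finset_vadd_inter_vadd ⟨B, rfl⟩ ⟨C, rfl⟩ x y).choose_spec

theorem interBases_subset {x : M} {B : Finset M} {y : M} {C : Finset M} :
    ↑(interBases x B y C) ⊆ (x +ᵥ (⟪B⟫ : Set M)) ∩ (y +ᵥ (⟪C⟫ : Set M)) := by
  rw [vadd_inter_vadd_eq]
  exact fun b hb => ⟨b, hb, 0, zero_mem _, add_zero b⟩

end FinitelyGenerated

section Soundness

variable {α : Type} [DecidableEq α]

theorem sem_mul (e f : CRE α) : sem (e.mul f) = sem e + sem f := by
  ext w
  simp only [sem, Set.mem_ofPred_eq, Set.mem_add, eq_comm]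

theorem sem_union (e f : CRE α) : sem (e.union f) = sem e ∪ sem f := rfl

theorem sem_star (e : CRE α) : sem e.star = AddSubmonoid.closure (sem e) := rfl

theorem closure_add_subset {M : Type*} [AddCommMonoid M] {s t : Set M} (h : s + t ⊆ t) :
    (AddSubmonoid.closure s : Set M) + t ⊆ t := by
  rintro _ ⟨x, hx, y, hy, rfl⟩
  induction hx using AddSubmonoid.closure_induction generalizing y with
  | mem x hx => exact h ⟨x, hx, y, hy, rfl⟩
  | zero => simpa using hy
  | add x x' _ _ ih ih' => simpa only [add_assoc] using ih _ (ih' y hy)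

theorem soundness {e f : CRE α} (h : CKA e f) : sem e = sem f := by
  induction h with
  | refl => rfl
  | symm _ ih => exact ih.symm
  | trans _ _ ih ih' => exact ih.trans ih'
  | mul_congr _ _ ih ih' => rw [sem_mul, sem_mul, ih, ih']
  | union_congr _ _ ih ih' => rw [sem_union, sem_union, ih, ih']
  | star_congr _ ih => rw [sem_star, sem_star, ih]
  | mul_assoc => simp only [sem_mul, add_assoc]
  | mul_comm => simp only [sem_mul, add_comm]
  | one_mul e => rw [sem_mul]; exact zero_add (sem e)
  | union_assoc => simp only [sem_union, Set.union_assoc]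
  | union_comm => simp only [sem_union, Set.union_comm]
  | union_idem => simp only [sem_union, Set.union_self]
  | zero_union e => exact Set.empty_union (sem e)
  | zero_mul e => rw [sem_mul]; exact Set.empty_add
  | left_distrib => simp only [sem_mul, sem_union, Set.add_union]
  | star_unfold e =>
    rw [sem_union, sem_union, sem_mul, sem_star]
    refine Set.union_eq_self_of_subset_left (Set.union_subset ?_ ?_)
    · exact Set.singleton_subset_iff.2 (AddSubmonoid.closure (sem e)).zero_mem
    · rintro _ ⟨x, hx, y, hy, rfl⟩
      exact add_mem (AddSubmonoid.subset_closure hx) hy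
  | star_lfp _ ih =>
    rw [sem_union, sem_mul] at ih ⊢
    exact Set.union_eq_self_of_subset_left (closure_add_subset (Set.union_eq_right.1 ih))

end Soundness

def CKA.setoid (α : Type) : Setoid (CRE α) := ⟨CKA, ⟨CKA.refl, CKA.symm, CKA.trans⟩⟩

def FreeCKA (α : Type) : Type := Quotient (CKA.setoid α)

namespace FreeCKA

variable {α : Type}

def mk (e : CRE α) : FreeCKA α := Quotient.mk _ e

theorem mk_eq_mk {e f : CRE α} : mk e = mk f ↔ CKA e f := Quotient.eq

@[elab_as_elim]
theorem ind {p : FreeCKA α → Prop} (h : ∀ e, p (mk e)) (a : FreeCKA α) : p a := Quotient.ind h a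

instance : Zero (FreeCKA α) := ⟨mk .zero⟩
instance : One (FreeCKA α) := ⟨mk .one⟩
instance : Add (FreeCKA α) := ⟨Quotient.map₂ CRE.union fun _ _ h _ _ h' => CKA.union_congr h h'⟩
instance : Mul (FreeCKA α) := ⟨Quotient.map₂ CRE.mul fun _ _ h _ _ h' => CKA.mul_congr h h'⟩
instance : KStar (FreeCKA α) := ⟨Quotient.map CRE.star fun _ _ => CKA.star_congr⟩

instance : CommSemiring (FreeCKA α) where
  add_assoc := by rintro ⟨a⟩ ⟨b⟩ ⟨c⟩; exact Quot.sound (CKA.union_assoc a b c).symm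
  zero_add := by rintro ⟨a⟩; exact Quot.sound (CKA.zero_union a)
  add_zero := by rintro ⟨a⟩; exact Quot.sound ((CKA.union_comm _ _).trans (CKA.zero_union a))
  add_comm := by rintro ⟨a⟩ ⟨b⟩; exact Quot.sound (CKA.union_comm a b)
  mul_assoc := by rintro ⟨a⟩ ⟨b⟩ ⟨c⟩; exact Quot.sound (CKA.mul_assoc a b c).symm
  one_mul := by rintro ⟨a⟩; exact Quot.sound (CKA.one_mul a)
  mul_one := by rintro ⟨a⟩; exact Quot.sound ((CKA.mul_comm _ _).trans (CKA.one_mul a))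
  zero_mul := by rintro ⟨a⟩; exact Quot.sound (CKA.zero_mul a)
  mul_zero := by rintro ⟨a⟩; exact Quot.sound ((CKA.mul_comm _ _).trans (CKA.zero_mul a))
  left_distrib := by rintro ⟨a⟩ ⟨b⟩ ⟨c⟩; exact Quot.sound (CKA.left_distrib a b c)
  right_distrib := by
    rintro ⟨a⟩ ⟨b⟩ ⟨c⟩
    exact Quot.sound ((CKA.mul_comm _ _).trans ((CKA.left_distrib c a b).trans
      (CKA.union_congr (CKA.mul_comm c a) (CKA.mul_comm c b))))
  mul_comm := by rintro ⟨a⟩ ⟨b⟩; exact Quot.sound (CKA.mul_comm a b)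
  nsmul := nsmulRec

instance : IdemCommSemiring (FreeCKA α) :=
  { (inferInstance : CommSemiring (FreeCKA α)),
    IdemSemiring.ofSemiring (by rintro ⟨a⟩; exact Quot.sound (CKA.union_idem a)) with }

theorem mk_le_mk {e f : CRE α} : mk e ≤ mk f ↔ leq e f := mk_eq_mk

theorem one_add_mul_kstar_le (a : FreeCKA α) : 1 + a * a∗ ≤ a∗ := by
  induction a using ind with | h e => exact mk_le_mk.2 (CKA.star_unfold e)

theorem kstar_mul_le_of_mul_le {a b : FreeCKA α} : a * b ≤ b → a∗ * b ≤ b := by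
  induction a using ind with | h e =>
  induction b using ind with | h f =>
  exact fun h => mk_le_mk.2 (CKA.star_lfp (mk_le_mk.1 h))

instance : CommKleeneAlgebra (FreeCKA α) where
  __ := (inferInstance : IdemCommSemiring (FreeCKA α))
  one_le_kstar a := le_self_add.trans (one_add_mul_kstar_le a)
  mul_kstar_le_kstar a := le_add_self.trans (one_add_mul_kstar_le a)
  kstar_mul_le_kstar a := mul_comm a a∗ ▸ le_add_self.trans (one_add_mul_kstar_le a)
  mul_kstar_le_self a b h := by rw [mul_comm] at h ⊢; exact kstar_mul_le_of_mul_le h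
  kstar_mul_le_self _ _ := kstar_mul_le_of_mul_le

section Semantics

variable [DecidableEq α]

def sem : FreeCKA α → Set (α → ℕ) := Quotient.lift CKAnote.sem fun _ _ => soundness

theorem sem_mk (e : CRE α) : sem (mk e) = CKAnote.sem e := rfl

theorem sem_zero : sem (0 : FreeCKA α) = ∅ := rfl

theorem sem_one : sem (1 : FreeCKA α) = {0} := rfl

theorem sem_add (a b : FreeCKA α) : sem (a + b) = sem a ∪ sem b := by
  induction a using ind; induction b using ind; rfl

theorem sem_mul (a b : FreeCKA α) : sem (a * b) = sem a + sem b := by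
  induction a using ind; induction b using ind; exact CKAnote.sem_mul _ _

theorem sem_kstar (a : FreeCKA α) : sem a∗ = AddSubmonoid.closure (sem a) := by
  induction a using ind; rfl

theorem sem_sum {ι : Type*} (s : Finset ι) (f : ι → FreeCKA α) :
    sem (∑ i ∈ s, f i) = ⋃ i ∈ s, sem (f i) := by
  classical
  induction s using Finset.induction_on with
  | empty => simp [sem_zero]
  | insert i s hi ih => rw [Finset.sum_insert hi, sem_add, ih, Finset.set_biUnion_insert]

end Semantics
section Monomials

variable [Fintype α]

def X (a : α) : FreeCKA α := mk (.letter a)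

def mon (u : α → ℕ) : FreeCKA α := ∏ a, X a ^ u a

theorem mon_add (u v : α → ℕ) : mon (u + v) = mon u * mon v := by
  simp only [mon, Pi.add_apply, pow_add, Finset.prod_mul_distrib]

theorem mon_zero : mon (0 : α → ℕ) = 1 := by
  simp only [mon, Pi.zero_apply, pow_zero, Finset.prod_const_one]

theorem mon_single [DecidableEq α] (a : α) : mon (Pi.single a 1) = X a := by
  rw [mon, Finset.prod_eq_single a] <;> simp_all

theorem sem_mon [DecidableEq α] (u : α → ℕ) : sem (mon u) = {u} := by
  have hpow (a : α) (n : ℕ) : sem (X a ^ n) = {Pi.single a n} := by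
    induction n with
    | zero => rw [pow_zero, sem_one, Pi.single_zero]
    | succ n ih =>
      rw [pow_succ, sem_mul, ih, X, sem_mk, CKAnote.sem, Set.singleton_add_singleton,
        ← Pi.single_add]
  have hprod (s : Finset α) : sem (∏ a ∈ s, X a ^ u a) = {∑ a ∈ s, Pi.single a (u a)} := by
    induction s using Finset.induction_on with
    | empty => rw [Finset.prod_empty, Finset.sum_empty, sem_one]
    | insert a s ha ih =>
      rw [Finset.prod_insert ha, Finset.sum_insert ha, sem_mul, ih, hpow,
        Set.singleton_add_singleton]
  rw [mon, hprod, Finset.univ_sum_single]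

end Monomials

section Linear

variable [Fintype α]

def lin (u : α → ℕ) (B : Finset (α → ℕ)) : FreeCKA α := mon u * (∑ b ∈ B, mon b)∗

theorem sem_lin [DecidableEq α] (u : α → ℕ) (B : Finset (α → ℕ)) :
    sem (lin u B) = u +ᵥ (⟪B⟫ : Set (α → ℕ)) := by
  have hB : sem (∑ b ∈ B, mon b) = B := by ext; simp [sem_sum, sem_mon]
  rw [lin, sem_mul, sem_kstar, sem_mon, hB, Set.singleton_add]
  rfl

theorem lin_empty (u : α → ℕ) : lin u ∅ = mon u := by
  rw [lin, Finset.sum_empty, kstar_zero, mul_one]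

theorem lin_mul_mon (u : α → ℕ) (B : Finset (α → ℕ)) (g : α → ℕ) :
    lin u B * mon g = lin (u + g) B := by
  rw [lin, lin, mon_add, mul_right_comm]

theorem mon_le_kstar_of_mem_closure {B : Finset (α → ℕ)} {v : α → ℕ} (hv : v ∈ ⟪B⟫) :
    mon v ≤ (∑ b ∈ B, mon b)∗ := by
  induction hv using AddSubmonoid.closure_induction with
  | mem v hv => exact (Finset.single_le_sum (fun _ _ => zero_le) hv).trans le_kstar
  | zero => exact mon_zero.le.trans one_le_kstar
  | add v w _ _ hv hw =>
    exact (mon_add v w).le.trans ((mul_le_mul' hv hw).trans (kstar_mul_kstar _).le)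

theorem kstar_le_kstar_of_closure_le {B C : Finset (α → ℕ)} (h : ⟪B⟫ ≤ ⟪C⟫) :
    (∑ b ∈ B, mon b)∗ ≤ (∑ c ∈ C, mon c)∗ := by
  refine (kstar_mono (sum_le_iff.2 fun b hb => ?_)).trans (kstar_idem _).le
  exact mon_le_kstar_of_mem_closure (h (AddSubmonoid.subset_closure hb))

theorem lin_le_lin {u v : α → ℕ} {B C : Finset (α → ℕ)} (hv : v ∈ u +ᵥ (⟪C⟫ : Set (α → ℕ)))
    (h : ⟪B⟫ ≤ ⟪C⟫) : lin v B ≤ lin u C := by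
  obtain ⟨m, hm, rfl⟩ := hv
  calc lin (u + m) B = mon u * (mon m * (∑ b ∈ B, mon b)∗) := by
        rw [lin, mon_add, mul_assoc]
    _ ≤ mon u * ((∑ c ∈ C, mon c)∗ * (∑ c ∈ C, mon c)∗) := mul_le_mul_right
        (mul_le_mul' (mon_le_kstar_of_mem_closure hm) (kstar_le_kstar_of_closure_le h)) _
    _ = lin u C := by rw [kstar_mul_kstar, lin]

theorem lin_mul_lin (u v : α → ℕ) (B C : Finset (α → ℕ)) :
    lin u B * lin v C = lin (u + v) (B ∪ C) := by
  rw [lin, lin, lin, sum_union_idem, kstar_add, mon_add]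
  ring

theorem kstar_lin (u : α → ℕ) (B : Finset (α → ℕ)) :
    (lin u B)∗ = 1 + lin u (insert u B) := by
  rw [lin, lin, sum_insert_idem, kstar_mul_kstar_eq_one_add]

def semilinear : AddSubmonoid (FreeCKA α) :=
  AddSubmonoid.closure (Set.range fun p : (α → ℕ) × Finset (α → ℕ) => lin p.1 p.2)

theorem lin_mem_semilinear (u : α → ℕ) (B : Finset (α → ℕ)) : lin u B ∈ semilinear :=
  AddSubmonoid.subset_closure ⟨(u, B), rfl⟩

theorem one_mem_semilinear : (1 : FreeCKA α) ∈ semilinear := by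
  simpa only [lin_empty, mon_zero] using lin_mem_semilinear (0 : α → ℕ) ∅

theorem mul_mem_semilinear {a b : FreeCKA α} (ha : a ∈ semilinear) (hb : b ∈ semilinear) :
    a * b ∈ semilinear := by
  have hab := AddSubmonoid.mul_mem_mul ha hb
  rw [semilinear, AddSubmonoid.closure_mul_closure] at hab
  refine AddSubmonoid.closure_le.2 ?_ hab
  rintro _ ⟨_, ⟨p, rfl⟩, _, ⟨q, rfl⟩, rfl⟩
  show lin p.1 p.2 * lin q.1 q.2 ∈ semilinear
  rw [lin_mul_lin]
  exact lin_mem_semilinear _ _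

theorem kstar_mem_semilinear {a : FreeCKA α} (ha : a ∈ semilinear) : a∗ ∈ semilinear := by
  induction ha using AddSubmonoid.closure_induction with
  | mem _ h =>
    obtain ⟨p, rfl⟩ := h
    rw [kstar_lin]
    exact add_mem one_mem_semilinear (lin_mem_semilinear _ _)
  | zero => rw [kstar_zero]; exact one_mem_semilinear
  | add a b _ _ ha hb => exact kstar_add a b ▸ mul_mem_semilinear ha hb

theorem mk_mem_semilinear [DecidableEq α] (e : CRE α) : mk e ∈ semilinear := by
  induction e with
  | zero => exact zero_mem _
  | one => exact one_mem_semilinear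
  | letter a =>
    show X a ∈ semilinear
    simpa only [lin_empty, mon_single] using lin_mem_semilinear (Pi.single a 1) ∅
  | mul e f he hf => exact mul_mem_semilinear he hf
  | union e f he hf => exact add_mem he hf
  | star e he => exact kstar_mem_semilinear he

theorem exists_finset_of_mem_semilinear {a : FreeCKA α} (ha : a ∈ semilinear) :
    ∃ S : Finset ((α → ℕ) × Finset (α → ℕ)), a = ∑ p ∈ S, lin p.1 p.2 := by
  obtain ⟨c, rfl⟩ := AddSubmonoid.mem_closure_range_iff.1 ha
  exact ⟨c.support, Finset.sum_congr rfl fun p hp =>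
    nsmul_eq_self (Finsupp.mem_support_iff.1 hp) _⟩

end Linear

section Cover

variable [Fintype α] (S : Finset ((α → ℕ) × Finset (α → ℕ)))

noncomputable def pieces (x : α → ℕ) (B : Finset (α → ℕ)) : FreeCKA α :=
  ∑ p ∈ S, ∑ b ∈ interBases x B p.1 p.2, lin b (interGens B p.2)

theorem lin_interGens_le_pieces {p : (α → ℕ) × Finset (α → ℕ)} (hp : p ∈ S) {x b : α → ℕ}
    {B : Finset (α → ℕ)} (hb : b ∈ interBases x B p.1 p.2) :
    lin b (interGens B p.2) ≤ pieces S x B :=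
  -- explicit `s` and `i`: unification alone would have to solve `?i.2 =?= p.2`
  (le_sum_of_mem (s := interBases x B p.1 p.2) (i := b) (fun b => lin b (interGens B p.2))
    hb).trans
    (le_sum_of_mem (s := S) (i := p)
      (fun p => ∑ b ∈ interBases x B p.1 p.2, lin b (interGens B p.2)) hp)

theorem lin_le_pieces_of_mem {p : (α → ℕ) × Finset (α → ℕ)} (hp : p ∈ S) {x z : α → ℕ}
    {B R : Finset (α → ℕ)}
    (hz : z ∈ (x +ᵥ (⟪B⟫ : Set (α → ℕ))) ∩ (p.1 +ᵥ (⟪p.2⟫ : Set (α → ℕ))))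
    (hR : ⟪R⟫ ≤ ⟪B⟫ ⊓ ⟪p.2⟫) : lin z R ≤ pieces S x B := by
  rw [vadd_inter_vadd_eq] at hz
  obtain ⟨b, hb, m, hm, rfl⟩ := hz
  rw [← closure_interGens] at hm hR
  exact (lin_le_lin ⟨m, hm, rfl⟩ hR).trans (lin_interGens_le_pieces S hp hb)

theorem pieces_le_sum (x : α → ℕ) (B : Finset (α → ℕ)) :
    pieces S x B ≤ ∑ p ∈ S, lin p.1 p.2 := by
  rw [pieces]
  refine Finset.sum_le_sum fun p _ => sum_le_iff.2 fun b hb => ?_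
  exact lin_le_lin (interBases_subset hb).2 (closure_interGens B p.2 ▸ inf_le_right)

theorem pieces_mono {x x' : α → ℕ} {B B' : Finset (α → ℕ)}
    (hx : x' ∈ x +ᵥ (⟪B⟫ : Set (α → ℕ))) (hB : ⟪B'⟫ ≤ ⟪B⟫) : pieces S x' B' ≤ pieces S x B := by
  refine sum_le_iff.2 fun p hp => sum_le_iff.2 fun b hb => ?_
  obtain ⟨hb₁, hb₂⟩ := interBases_subset hb
  exact lin_le_pieces_of_mem S hp ⟨vadd_subset_vadd_of_mem hx hB hb₁, hb₂⟩
    (closure_interGens B' p.2 ▸ inf_le_inf_right _ hB)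

theorem lin_le_pieces_of_subset {x : α → ℕ} {B : Finset (α → ℕ)}
    (hcov : x +ᵥ (⟪B⟫ : Set (α → ℕ)) ⊆ ⋃ p ∈ S, p.1 +ᵥ (⟪p.2⟫ : Set (α → ℕ))) :
    lin x B ≤ pieces S x B := by
  classical
  induction hn : (S.filter fun p => ¬⟪B⟫ ≤ ⟪p.2⟫).card using Nat.strong_induction_on
    generalizing x B with
  | _ n ih =>
  have hx : x ∈ x +ᵥ (⟪B⟫ : Set (α → ℕ)) := ⟨0, zero_mem _, add_zero x⟩
  obtain ⟨p, hp, hxp⟩ := Set.mem_iUnion₂.1 (hcov hx)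
  have hbase : mon x ≤ pieces S x B :=
    lin_empty x ▸ lin_le_pieces_of_mem S hp ⟨hx, hxp⟩ (by simp)
  have hstep : ∀ p ∈ S, ∀ b ∈ interBases x B p.1 p.2, ∀ g ∈ B,
      lin b (interGens B p.2) * mon g ≤ pieces S x B := by
    intro p hp b hb g hg
    obtain ⟨hb₁, hb₂⟩ := interBases_subset hb
    have hbg := add_mem_vadd hb₁ (AddSubmonoid.subset_closure hg)
    have hle : ⟪interGens B p.2⟫ ≤ ⟪B⟫ := closure_interGens B p.2 ▸ inf_le_left
    rw [lin_mul_mon]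
    by_cases hgp : g ∈ ⟪p.2⟫
    · exact lin_le_pieces_of_mem S hp ⟨hbg, add_mem_vadd hb₂ hgp⟩ (closure_interGens B p.2).le
    · have hBp : ¬⟪B⟫ ≤ ⟪p.2⟫ := fun h => hgp (h (AddSubmonoid.subset_closure hg))
      have hlt := card_filter_not_le_lt (Q := fun p : (α → ℕ) × Finset (α → ℕ) => ⟪p.2⟫)
        hle hp hBp (closure_interGens B p.2 ▸ inf_le_right)
      calc lin (b + g) (interGens B p.2) ≤ pieces S (b + g) (interGens B p.2) :=
            ih _ (hn ▸ hlt) ((vadd_subset_vadd_of_mem hbg hle).trans hcov) rfl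
        _ ≤ pieces S x B := pieces_mono S hbg hle
  refine mul_kstar_le hbase ?_
  rw [pieces, Finset.sum_mul]
  refine sum_le_iff.2 fun p hp => ?_
  rw [Finset.sum_mul_sum]
  exact sum_le_iff.2 fun b hb => sum_le_iff.2 fun g hg => hstep p hp b hb g hg

theorem lin_le_sum_of_sem_subset [DecidableEq α] {x : α → ℕ} {B : Finset (α → ℕ)}
    (h : sem (lin x B) ⊆ sem (∑ p ∈ S, lin p.1 p.2)) : lin x B ≤ ∑ p ∈ S, lin p.1 p.2 := by
  simp only [sem_sum, sem_lin] at h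
  exact (lin_le_pieces_of_subset S h).trans (pieces_le_sum S x B)

end Cover

theorem le_of_sem_subset [Fintype α] [DecidableEq α] {a b : FreeCKA α} (ha : a ∈ semilinear)
    (hb : b ∈ semilinear) (h : sem a ⊆ sem b) : a ≤ b := by
  obtain ⟨S, rfl⟩ := exists_finset_of_mem_semilinear hb
  induction ha using AddSubmonoid.closure_induction with
  | mem _ hp => obtain ⟨p, rfl⟩ := hp; exact lin_le_sum_of_sem_subset S h
  | zero => exact zero_le
  | add a a' _ _ iha iha' =>
    rw [sem_add, Set.union_subset_iff] at h
    exact add_le (iha h.1) (iha' h.2)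

end FreeCKA

variable {α : Type} [Fintype α] [DecidableEq α]

/-- Completeness of commutative Kleene algebra: `e ≡ f` iff `⟦e⟧ = ⟦f⟧`. -/
theorem completeness (e f : CRE α) : CKA e f ↔ sem e = sem f := by
  refine ⟨soundness, fun h => FreeCKA.mk_eq_mk.1 (le_antisymm ?_ ?_)⟩
  · exact FreeCKA.le_of_sem_subset (FreeCKA.mk_mem_semilinear e) (FreeCKA.mk_mem_semilinear f)
      h.subset
  · exact FreeCKA.le_of_sem_subset (FreeCKA.mk_mem_semilinear f) (FreeCKA.mk_mem_semilinear e)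
      h.superset

end CKAnote
end

section
/- For any Parikh vector u ∈ ℕ^Σ and any commutative regular expression e, if u ∈ ⟦e⟧ then expr(u) ≤ e is derivable, i.e. expr(u) ∪ e ≡ e. -/
/-!
Induction on `e`. Modulo `≡`, `expr` is a monoid morphism from `(ℕ^Σ, +)` to `(CRE, ·)`:
`expr(u + v) ≡ expr(u) · expr(v)`, `expr(0) ≡ 1` and `expr(e_a) ≡ a`, which settles the
atomic, product and union cases since `·` is monotone for `≤`. For `e*`, induct on the
generation of `⟦e*⟧` from `⟦e⟧` using `1 ≤ e*`, `e ≤ e*` and `e* · e* ≤ e*`; the last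
inequality is the fixpoint rule applied to `e · e* ≤ e*`.
-/

namespace CKAnote

variable {α : Type}

theorem CKA.leq {e f : CRE α} (h : CKA e f) : leq e f :=
  (CKA.union_congr h (CKA.refl f)).trans (CKA.union_idem f)

theorem leq_refl (e : CRE α) : leq e e := CKA.union_idem e

theorem leq_trans {e f g : CRE α} (hef : leq e f) (hfg : leq f g) : leq e g :=
  (CKA.union_congr (CKA.refl e) hfg.symm).trans <| (CKA.union_assoc _ _ _).trans <|
    (CKA.union_congr hef (CKA.refl g)).trans hfg

theorem leq_of_CKA_of_leq {e e' f : CRE α} (h : CKA e e') (h' : leq e' f) : leq e f :=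
  (CKA.union_congr h (CKA.refl f)).trans h'

theorem leq_union_left (e f : CRE α) : leq e (e.union f) :=
  (CKA.union_assoc e e f).trans (CKA.union_congr (CKA.union_idem e) (CKA.refl f))

theorem leq_union_right (e f : CRE α) : leq f (e.union f) :=
  leq_trans (leq_union_left f e) (CKA.union_comm f e).leq

theorem CKA.mul_one (e : CRE α) : CKA (e.mul CRE.one) e :=
  (CKA.mul_comm _ _).trans (CKA.one_mul e)

theorem CKA.right_distrib (e f g : CRE α) :
    CKA ((e.union f).mul g) ((e.mul g).union (f.mul g)) :=
  (CKA.mul_comm _ _).trans <| (CKA.left_distrib g e f).trans <|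
    CKA.union_congr (CKA.mul_comm g e) (CKA.mul_comm g f)

theorem CKA.mul_mul_mul_comm (a b c d : CRE α) :
    CKA ((a.mul b).mul (c.mul d)) ((a.mul c).mul (b.mul d)) :=
  (CKA.mul_assoc a b (c.mul d)).symm.trans <|
    (CKA.mul_congr (CKA.refl a) <| (CKA.mul_assoc b c d).trans <|
      (CKA.mul_congr (CKA.mul_comm b c) (CKA.refl d)).trans (CKA.mul_assoc c b d).symm).trans <|
    CKA.mul_assoc a c (b.mul d)

theorem mul_leq_mul {e e' f f' : CRE α} (he : leq e e') (hf : leq f f') :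
    leq (e.mul f) (e'.mul f') :=
  have hleft : leq (e.mul f) (e'.mul f) :=
    (CKA.right_distrib e e' f).symm.trans (CKA.mul_congr he (CKA.refl f))
  have hright : leq (e'.mul f) (e'.mul f') :=
    (CKA.left_distrib e' f f').symm.trans (CKA.mul_congr (CKA.refl e') hf)
  leq_trans hleft hright

theorem one_leq_star (e : CRE α) : leq CRE.one e.star :=
  leq_trans (leq_union_left _ _) (CKA.star_unfold e)

theorem mul_star_leq_star (e : CRE α) : leq (e.mul e.star) e.star :=
  leq_trans (leq_union_right _ _) (CKA.star_unfold e)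

theorem leq_star (e : CRE α) : leq e e.star :=
  leq_trans (leq_of_CKA_of_leq (CKA.mul_one e).symm
    (mul_leq_mul (leq_refl e) (one_leq_star e))) (mul_star_leq_star e)

theorem star_mul_star_leq_star (e : CRE α) : leq (e.star.mul e.star) e.star :=
  CKA.star_lfp (mul_star_leq_star e)

theorem CKA.pow_add (e : CRE α) (m n : ℕ) :
    CKA (pow e (m + n)) ((pow e m).mul (pow e n)) := by
  induction n with
  | zero => exact (CKA.mul_one _).symm
  | succ n ih =>
    show CKA (e.mul (pow e (m + n))) ((pow e m).mul (e.mul (pow e n)))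
    exact (CKA.mul_congr (CKA.refl e) ih).trans <| (CKA.mul_assoc e _ _).trans <|
      (CKA.mul_congr (CKA.mul_comm e _) (CKA.refl _)).trans (CKA.mul_assoc _ e _).symm

section prodList

variable {β : Type} (l : List β) (f g : β → CRE α)

theorem CKA.prodList_map_congr (h : ∀ x ∈ l, CKA (f x) (g x)) :
    CKA (prodList (l.map f)) (prodList (l.map g)) := by
  induction l with
  | nil => exact CKA.refl _
  | cons x l ih =>
    exact CKA.mul_congr (h x List.mem_cons_self) (ih fun y hy => h y (List.mem_cons_of_mem x hy))

theorem CKA.prodList_map_eq_one (h : ∀ x ∈ l, CKA (f x) CRE.one) :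
    CKA (prodList (l.map f)) CRE.one := by
  induction l with
  | nil => exact CKA.refl _
  | cons x l ih =>
    exact (CKA.mul_congr (h x List.mem_cons_self)
      (ih fun y hy => h y (List.mem_cons_of_mem x hy))).trans (CKA.one_mul _)

theorem CKA.prodList_map_mul :
    CKA (prodList (l.map fun x => (f x).mul (g x)))
      ((prodList (l.map f)).mul (prodList (l.map g))) := by
  induction l with
  | nil => exact (CKA.one_mul _).symm
  | cons x l ih =>
    exact (CKA.mul_congr (CKA.refl _) ih).trans (CKA.mul_mul_mul_comm (f x) (g x) _ _)

theorem CKA.prodList_map_eq_of_nodup {a : β} (hl : l.Nodup) (ha : a ∈ l)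
    (h : ∀ x ∈ l, x ≠ a → CKA (f x) CRE.one) : CKA (prodList (l.map f)) (f a) := by
  induction l with
  | nil => simp at ha
  | cons x l ih =>
    obtain ⟨hx, hl⟩ := List.nodup_cons.1 hl
    show CKA ((f x).mul (prodList (l.map f))) (f a)
    by_cases hxa : x = a
    · subst hxa
      have hrest := CKA.prodList_map_eq_one l f fun y hy =>
        h y (List.mem_cons_of_mem x hy) (ne_of_mem_of_not_mem hy hx)
      exact (CKA.mul_congr (CKA.refl _) hrest).trans (CKA.mul_one _)
    · have ha' : a ∈ l := (List.mem_cons.1 ha).resolve_left (Ne.symm hxa)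
      exact (CKA.mul_congr (h x List.mem_cons_self hxa)
        (ih hl ha' fun y hy => h y (List.mem_cons_of_mem x hy))).trans (CKA.one_mul _)

end prodList

variable [Fintype α]

theorem CKA.exprVec_add (u v : α → ℕ) :
    CKA (exprVec (u + v)) ((exprVec u).mul (exprVec v)) :=
  (CKA.prodList_map_congr _ _ _ fun _ _ => CKA.pow_add _ _ _).trans (CKA.prodList_map_mul _ _ _)

theorem CKA.exprVec_zero : CKA (exprVec (0 : α → ℕ)) CRE.one :=
  CKA.prodList_map_eq_one _ _ fun _ _ => CKA.refl _

variable [DecidableEq α]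

theorem CKA.exprVec_single (a : α) :
    CKA (exprVec (Pi.single a 1)) (CRE.letter a) := by
  refine (CKA.prodList_map_eq_of_nodup _ _ (Finset.nodup_toList _) (Finset.mem_toList.2
    (Finset.mem_univ a)) fun b _ hb => ?_).trans ?_
  · rw [Pi.single_eq_of_ne hb]
    exact CKA.refl _
  · rw [Pi.single_eq_same]
    exact CKA.mul_one _

theorem exprVec_leq_star_of_mem_closure {e : CRE α} (he : ∀ u ∈ sem e, leq (exprVec u) e)
    {u : α → ℕ} (hu : u ∈ AddSubmonoid.closure (sem e)) : leq (exprVec u) e.star := by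
  induction hu using AddSubmonoid.closure_induction with
  | mem x hx => exact leq_trans (he x hx) (leq_star e)
  | zero => exact leq_trans CKA.exprVec_zero.leq (one_leq_star e)
  | add x y _ _ hx hy =>
    exact leq_trans (leq_of_CKA_of_leq (CKA.exprVec_add x y) (mul_leq_mul hx hy))
      (star_mul_star_leq_star e)

/-- If `u ∈ ⟦e⟧` then `expr(u) ≤ e` is derivable. -/
theorem ax_mem (u : α → ℕ) (e : CRE α) (h : u ∈ sem e) :
    leq (exprVec u) e := by
  induction e generalizing u with
  | zero => exact absurd h (Set.notMem_empty u)
  | one =>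
    obtain rfl : u = 0 := h
    exact CKA.exprVec_zero.leq
  | letter a =>
    obtain rfl : u = Pi.single a 1 := h
    exact (CKA.exprVec_single a).leq
  | mul e f ihe ihf =>
    obtain ⟨x, hx, y, hy, rfl⟩ := h
    exact leq_of_CKA_of_leq (CKA.exprVec_add x y) (mul_leq_mul (ihe x hx) (ihf y hy))
  | union e f ihe ihf =>
    rcases h with h | h
    · exact leq_trans (ihe u h) (leq_union_left e f)
    · exact leq_trans (ihf u h) (leq_union_right e f)
  | star e ihe => exact exprVec_leq_star_of_mem_closure ihe h

end CKAnote
end
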